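/- arXiv:2604.06590 — 2 statements merged into one kernel-verified Lean document; each statement's English description precedes it below -/
import Mathlib

section
/- For every odd integer n ≥ 5, let ε_n := 4/((n-3)^2 + 6). Then for all ρ with 0 < ρ < 1 - 2ε_n, the noise stability of g_n is strictly less than that of Majority: Stab_ρ(g_n) < Stab_ρ(Maj_n). -/
open Finset

noncomputable def chi (b : Bool) : ℝ := if b then 1 else -1

noncomputable def maj (n : ℕ) (x : Fin n → Bool) : ℝ :=
  Real.sign (∑ i, chi (x i))

def eVec (n : ℕ) : Fin n → Bool := fun i => decide ((i : ℕ) < (n - 1) / 2 + 1)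

noncomputable def gfun (n : ℕ) (x : Fin n → Bool) : ℝ :=
  if x = eVec n ∨ x = (fun i => !(eVec n i)) then - maj n x else maj n x

noncomputable def stab (n : ℕ) (ρ : ℝ) (f : (Fin n → Bool) → ℝ) : ℝ :=
  (1 / 2 ^ n) * ∑ x : Fin n → Bool, ∑ z : Fin n → Bool,
    (∏ i, if z i then (1 - ρ) / 2 else (1 + ρ) / 2) * (f x * f (fun i => xor (x i) (z i)))

noncomputable def phi (n : ℕ) (p : ℝ) (f : (Fin n → Bool) → ℝ) : ℝ :=
  ∑ s : Fin n → Bool, (∏ i, if s i then p else 1 - p) *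
    ((1 / 2 ^ n) * ∑ x : Fin n → Bool,
      |(1 / 2 ^ n) * ∑ z : Fin n → Bool, f (fun i => if s i then x i else z i)|)

noncomputable def binomPMF (m : ℕ) (q : ℝ) (k : ℕ) : ℝ :=
  (m.choose k : ℝ) * q ^ k * (1 - q) ^ (m - k)

noncomputable def binomCollision (m : ℕ) (q : ℝ) : ℝ :=
  ∑ k ∈ Finset.range (m + 1), (binomPMF m q k) ^ 2

def cnt {m : ℕ} (z : Fin m → Bool) : ℕ := #{i : Fin m | z i = true}

lemma cnt_le {m : ℕ} (z : Fin m → Bool) : cnt z ≤ m := by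
  simpa [cnt] using (Finset.card_filter_le univ (fun i : Fin m => z i = true)).trans (by simp)

lemma cnt_not_card {m : ℕ} (z : Fin m → Bool) :
    #{i : Fin m | ¬ z i = true} = m - cnt z := by
  classical
  have := Finset.card_filter_add_card_filter_not (s := (univ : Finset (Fin m)))
      (p := fun i => z i = true)
  simp only [Finset.card_univ, Fintype.card_fin] at this
  unfold cnt; omega

lemma card_cnt (m k : ℕ) : #{z : Fin m → Bool | cnt z = k} = m.choose k := by
  classical
  have h : #(Finset.powersetCard k (univ : Finset (Fin m))) = m.choose k := by
    rw [Finset.card_powersetCard, Finset.card_univ, Fintype.card_fin]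
  rw [← h]
  refine Finset.card_bij (fun z _ => ({i : Fin m | z i = true} : Finset (Fin m))) ?_ ?_ ?_
  · intro z hz
    rw [Finset.mem_powersetCard]
    exact ⟨Finset.subset_univ _, (Finset.mem_filter.1 hz).2⟩
  · intro z1 h1 z2 h2 he
    funext i
    have := Finset.ext_iff.1 he i
    simp only [Finset.mem_filter, Finset.mem_univ, true_and] at this
    cases hb : z1 i <;> cases hb2 : z2 i <;> simp_all
  · intro s hs
    refine ⟨fun i => decide (i ∈ s), ?_, ?_⟩
    · rw [Finset.mem_filter]
      rw [Finset.mem_powersetCard] at hs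
      refine ⟨Finset.mem_univ _, ?_⟩
      unfold cnt
      rw [← hs.2]
      congr 1
      ext i; simp
    · ext i; simp

lemma sum_count (m : ℕ) (f : ℕ → ℝ) :
    ∑ z : Fin m → Bool, f (cnt z) = ∑ k ∈ Finset.range (m+1), (m.choose k : ℝ) * f k := by
  classical
  rw [← Finset.sum_fiberwise_of_maps_to' (t := Finset.range (m+1)) (g := cnt)
    (fun z _ => Finset.mem_range.2 (Nat.lt_succ_of_le (cnt_le z))) f]
  refine Finset.sum_congr rfl fun k _ => ?_
  rw [Finset.sum_const, card_cnt, nsmul_eq_mul]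

lemma prod_wt {m : ℕ} (p q : ℝ) (z : Fin m → Bool) :
    (∏ i, if z i then q else p) = q ^ cnt z * p ^ (m - cnt z) := by
  classical
  rw [← Finset.prod_filter_mul_prod_filter_not univ (fun i => z i = true)]
  have h1 : (∏ i ∈ {i : Fin m | z i = true}, if z i then q else p) = q ^ cnt z := by
    rw [Finset.prod_congr rfl (g := fun _ => q) (fun i hi => by
      simp only [Finset.mem_filter] at hi; simp [hi.2]), Finset.prod_const, cnt]
  have h2 : (∏ i ∈ {i : Fin m | ¬ z i = true}, if z i then q else p) = p ^ (m - cnt z) := by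
    rw [Finset.prod_congr rfl (g := fun _ => p) (fun i hi => by
      simp only [Finset.mem_filter] at hi; simp [hi.2]), Finset.prod_const, cnt_not_card]
  rw [h1, h2]

lemma chi_sum {m : ℕ} (z : Fin m → Bool) :
    (∑ i, (if z i then (1:ℝ) else -1)) = 2 * cnt z - m := by
  classical
  rw [← Finset.sum_filter_add_sum_filter_not univ (fun i => z i = true)]
  have h1 : (∑ i ∈ {i : Fin m | z i = true}, if z i then (1:ℝ) else -1) = cnt z := by
    rw [Finset.sum_congr rfl (g := fun _ => (1:ℝ)) (fun i hi => by
      simp only [Finset.mem_filter] at hi; simp [hi.2]), Finset.sum_const, cnt]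
    simp
  have h2 : (∑ i ∈ {i : Fin m | ¬ z i = true}, if z i then (1:ℝ) else -1) = -((m:ℝ) - cnt z) := by
    rw [Finset.sum_congr rfl (g := fun _ => (-1:ℝ)) (fun i hi => by
      simp only [Finset.mem_filter] at hi; simp [hi.2]), Finset.sum_const, cnt_not_card]
    rw [nsmul_eq_mul]
    push_cast [Nat.cast_sub (cnt_le z)]
    ring
  rw [h1, h2]
  ring

noncomputable def sgn (a b : ℕ) : ℝ := if a ≤ b then 1 else -1


lemma sign_aux (a b : ℕ) : Real.sign (1 - 2*(a:ℝ) + 2*(b:ℝ)) = sgn a b := by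
  unfold sgn
  by_cases hab : a ≤ b
  · rw [if_pos hab]
    apply Real.sign_of_pos
    have : (a:ℝ) ≤ b := by exact_mod_cast hab
    linarith
  · rw [if_neg hab]
    apply Real.sign_of_neg
    have : (b:ℝ) + 1 ≤ a := by exact_mod_cast Nat.succ_le_of_lt (Nat.lt_of_not_le hab)
    linarith

lemma tsum_eq (h n : ℕ) (hn' : (h+1)+h = n) (p q : ℝ) :
    ∑ z : Fin n → Bool, (∏ i, if z i then q else p) * Real.sign (∑ i, chi (xor (eVec n i) (z i)))
    = ∑ a ∈ range (h+2), ∑ b ∈ range (h+1),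
        (((h+1).choose a : ℝ) * (q^a * p^(h+1-a))) * (((h.choose b : ℝ)) * (q^b * p^(h-b))) * sgn a b := by
  classical
  have hn2 : (n-1)/2 + 1 = h + 1 := by omega
  set ι : (Fin (h+1) ⊕ Fin h) ≃ Fin n := finSumFinEquiv.trans (finCongr hn') with hι
  set E : ((Fin (h+1) → Bool) × (Fin h → Bool)) ≃ (Fin n → Bool) :=
    (Equiv.sumArrowEquivProdArrow _ _ _).symm.trans (ι.arrowCongr (Equiv.refl Bool)) with hE
  have key : ∀ uv : ((Fin (h+1) → Bool) × (Fin h → Bool)),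
      (∏ i, if E uv i then q else p) * Real.sign (∑ i, chi (xor (eVec n i) (E uv i)))
      = ((q ^ cnt uv.1 * p ^ (h+1 - cnt uv.1)) * (q ^ cnt uv.2 * p ^ (h - cnt uv.2)))
        * sgn (cnt uv.1) (cnt uv.2) := by
    rintro ⟨u, v⟩
    have hz : ∀ k, E (u,v) (ι k) = Sum.elim u v k := by
      intro k
      simp [hE, Equiv.arrowCongr, Equiv.sumArrowEquivProdArrow]
    have hzl : ∀ i : Fin (h+1), E (u,v) (ι (Sum.inl i)) = u i := fun i => hz (Sum.inl i)
    have hzr : ∀ j : Fin h, E (u,v) (ι (Sum.inr j)) = v j := fun j => hz (Sum.inr j)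
    have hel : ∀ i : Fin (h+1), eVec n (ι (Sum.inl i)) = true := by
      intro i
      have : ((ι (Sum.inl i)) : ℕ) = (i : ℕ) := by simp [hι]
      simp only [eVec, this, hn2, decide_eq_true_eq]
      omega
    have her : ∀ j : Fin h, eVec n (ι (Sum.inr j)) = false := by
      intro j
      have : ((ι (Sum.inr j)) : ℕ) = (h+1) + (j : ℕ) := by simp [hι]
      simp only [eVec, this, hn2]
      simp only [decide_eq_false_iff_not]
      omega
    have hprod : (∏ i, if E (u,v) i then q else p)
        = (q ^ cnt u * p ^ (h+1 - cnt u)) * (q ^ cnt v * p ^ (h - cnt v)) := by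
      rw [← Equiv.prod_comp ι (fun i => if E (u,v) i then q else p), Fintype.prod_sum_type]
      simp only [hzl, hzr]
      rw [prod_wt p q u, prod_wt p q v]
    have hsum : (∑ i, chi (xor (eVec n i) (E (u,v) i)))
        = 1 - 2 * (cnt u : ℝ) + 2 * (cnt v : ℝ) := by
      rw [← Equiv.sum_comp ι (fun i => chi (xor (eVec n i) (E (u,v) i))), Fintype.sum_sum_type]
      simp only [hzl, hzr, hel, her, Bool.true_xor, Bool.false_xor]
      have c1 : ∀ b : Bool, chi (!b) = -(if b then (1:ℝ) else -1) := by intro b; cases b <;> simp [chi]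
      have c2 : ∀ b : Bool, chi b = (if b then (1:ℝ) else -1) := by intro b; cases b <;> simp [chi]
      simp only [c1, c2]
      rw [Finset.sum_neg_distrib, chi_sum u, chi_sum v]
      push_cast
      ring
    rw [hprod, hsum, sign_aux]
  rw [← Equiv.sum_comp E (fun z => (∏ i, if z i then q else p) * Real.sign (∑ i, chi (xor (eVec n i) (z i))))]
  rw [Fintype.sum_prod_type]
  simp only [key]
  set A : ℕ → ℕ → ℝ := fun a b => q ^ a * p ^ (h + 1 - a) * (q ^ b * p ^ (h - b)) * sgn a b with hA
  have step1 : ∀ u : Fin (h+1) → Bool,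
      ∑ v : Fin h → Bool, A (cnt u) (cnt v) = ∑ b ∈ range (h+1), (h.choose b : ℝ) * A (cnt u) b :=
    fun u => sum_count h (fun b => A (cnt u) b)
  have step2 : ∑ u : Fin (h+1) → Bool, ∑ b ∈ range (h+1), (h.choose b : ℝ) * A (cnt u) b
      = ∑ a ∈ range (h+1+1), ((h+1).choose a : ℝ) * ∑ b ∈ range (h+1), (h.choose b : ℝ) * A a b :=
    sum_count (h+1) (fun a => ∑ b ∈ range (h+1), (h.choose b : ℝ) * A a b)
  calc ∑ u : Fin (h+1) → Bool, ∑ v : Fin h → Bool, A (cnt u) (cnt v)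
      = ∑ a ∈ range (h+1+1), ((h+1).choose a : ℝ) * ∑ b ∈ range (h+1), (h.choose b : ℝ) * A a b := by
        rw [← step2]; exact Finset.sum_congr rfl fun u _ => step1 u
    _ = _ := by
        rw [show h+2 = h+1+1 from rfl]
        refine Finset.sum_congr rfl fun a _ => ?_
        rw [Finset.mul_sum]
        refine Finset.sum_congr rfl fun b _ => ?_
        simp only [hA]; ring

lemma pascal_sum (h : ℕ) (x : ℕ → ℝ) :
    ∑ a ∈ range (h+2), ((h+1).choose a : ℝ) * x a
      = ∑ a ∈ range (h+1), (h.choose a : ℝ) * x a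
        + ∑ a ∈ range (h+1), (h.choose a : ℝ) * x (a+1) := by
  rw [Finset.sum_range_succ' (fun a => ((h+1).choose a : ℝ) * x a) (h+1)]
  have e1 : ∀ a, (((h+1).choose (a+1) : ℝ)) = (h.choose a : ℝ) + (h.choose (a+1) : ℝ) := by
    intro a; rw [Nat.choose_succ_succ]; push_cast; ring
  have e2 : ∑ a ∈ range (h+1), ((h.choose (a+1) : ℝ)) * x (a+1)
      = ∑ a ∈ range (h+1), (h.choose a : ℝ) * x a - x 0 := by
    rw [Finset.sum_range_succ' (fun a => ((h.choose a : ℝ)) * x a) h]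
    have : (h.choose (h+1) : ℝ) * x (h+1) = 0 := by simp [Nat.choose_succ_self]
    rw [Finset.sum_range_succ (fun a => ((h.choose (a+1) : ℝ)) * x (a+1)) h, this]
    simp [Nat.choose_zero_right]
  calc ∑ a ∈ range (h+1), ((h+1).choose (a+1) : ℝ) * x (a+1) + ((h+1).choose 0 : ℝ) * x 0
      = ∑ a ∈ range (h+1), ((h.choose a : ℝ) * x (a+1) + (h.choose (a+1) : ℝ) * x (a+1)) + x 0 := by
        rw [Nat.choose_zero_right]
        push_cast
        refine congrArg₂ (· + ·) (Finset.sum_congr rfl fun a _ => by rw [e1 a]; ring) (one_mul _)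
    _ = _ := by rw [Finset.sum_add_distrib, e2]; ring

lemma lambda_sq (P : ℕ → ℝ) (N : ℕ) :
    2 * (∑ b ∈ range N, P b * (∑ a ∈ range b, P a)) + ∑ b ∈ range N, (P b)^2
      = (∑ b ∈ range N, P b)^2 := by
  induction N with
  | zero => simp
  | succ N ih =>
    rw [Finset.sum_range_succ, Finset.sum_range_succ (fun b => (P b)^2),
      Finset.sum_range_succ P N]
    nlinarith [ih]

lemma S2_eq (h : ℕ) (p q : ℝ) (hpq : p + q = 1) :
    ∑ a ∈ range (h+2), ∑ b ∈ range (h+1),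
        (((h+1).choose a : ℝ) * (q^a * p^(h+1-a))) * (((h.choose b : ℝ)) * (q^b * p^(h-b))) * sgn a b
      = (p - q) * ∑ k ∈ range (h+1), ((h.choose k : ℝ) * (q^k * p^(h-k)))^2 := by
  set P : ℕ → ℝ := fun k => (h.choose k : ℝ) * (q^k * p^(h-k)) with hP
  have hF : ∑ a ∈ range (h+1), P a = 1 := by
    have := add_pow q p h
    have hqp : q + p = 1 := by linarith
    rw [hqp, one_pow] at this
    rw [this]
    exact Finset.sum_congr rfl fun a _ => by simp only [hP]; ring
  have hUf : ∀ b ∈ range (h+1), ∑ a ∈ range (h+1), P a * sgn a b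
      = 2 * (∑ a ∈ range (b+1), P a) - 1 := by
    intro b hb
    rw [Finset.mem_range] at hb
    have : ∀ a, P a * sgn a b = 2 * (if a ≤ b then P a else 0) - P a := by
      intro a; unfold sgn; by_cases hab : a ≤ b <;> simp [hab] <;> ring
    rw [Finset.sum_congr rfl (fun a _ => this a), Finset.sum_sub_distrib, ← Finset.mul_sum,
      Finset.sum_ite, Finset.sum_const_zero, add_zero, hF]
    congr 2
    apply Finset.sum_congr _ (fun _ _ => rfl)
    ext a; simp only [Finset.mem_filter, Finset.mem_range]; omega
  have hLf : ∀ b ∈ range (h+1), ∑ a ∈ range (h+1), P a * sgn (a+1) b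
      = 2 * (∑ a ∈ range b, P a) - 1 := by
    intro b hb
    rw [Finset.mem_range] at hb
    have : ∀ a, P a * sgn (a+1) b = 2 * (if a + 1 ≤ b then P a else 0) - P a := by
      intro a; unfold sgn; by_cases hab : a + 1 ≤ b <;> simp [hab] <;> ring
    rw [Finset.sum_congr rfl (fun a _ => this a), Finset.sum_sub_distrib, ← Finset.mul_sum,
      Finset.sum_ite, Finset.sum_const_zero, add_zero, hF]
    congr 2
    apply Finset.sum_congr _ (fun _ _ => rfl)
    ext a; simp only [Finset.mem_filter, Finset.mem_range]; omega
  have swap : ∑ a ∈ range (h+2), ∑ b ∈ range (h+1),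
        (((h+1).choose a : ℝ) * (q^a * p^(h+1-a))) * (P b) * sgn a b
      = ∑ b ∈ range (h+1), ∑ a ∈ range (h+2),
        (((h+1).choose a : ℝ)) * ((q^a * p^(h+1-a)) * (P b) * sgn a b) := by
    rw [Finset.sum_comm]
    exact Finset.sum_congr rfl fun b _ => Finset.sum_congr rfl fun a _ => by ring
  have inner : ∀ b ∈ range (h+1), ∑ a ∈ range (h+2),
        (((h+1).choose a : ℝ)) * ((q^a * p^(h+1-a)) * (P b) * sgn a b)
      = P b * (p * (2 * (∑ a ∈ range (b+1), P a) - 1) + q * (2 * (∑ a ∈ range b, P a) - 1)) := by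
    intro b hb
    rw [pascal_sum h (fun a => (q^a * p^(h+1-a)) * (P b) * sgn a b)]
    have e1 : ∀ a ∈ range (h+1), (h.choose a : ℝ) * ((q^a * p^(h+1-a)) * (P b) * sgn a b)
        = p * (P a * sgn a b * P b) := by
      intro a ha
      rw [Finset.mem_range] at ha
      have : h + 1 - a = (h - a) + 1 := by omega
      rw [this, pow_succ, hP]
      ring
    have e2 : ∀ a ∈ range (h+1), (h.choose a : ℝ) * ((q^(a+1) * p^(h+1-(a+1))) * (P b) * sgn (a+1) b)
        = q * (P a * sgn (a+1) b * P b) := by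
      intro a ha
      rw [Finset.mem_range] at ha
      have : h + 1 - (a+1) = h - a := by omega
      rw [this, pow_succ, hP]
      ring
    rw [Finset.sum_congr rfl e1, Finset.sum_congr rfl e2]
    rw [← Finset.mul_sum, ← Finset.mul_sum, ← Finset.sum_mul, ← Finset.sum_mul,
      hUf b hb, hLf b hb]
    ring
  calc ∑ a ∈ range (h+2), ∑ b ∈ range (h+1),
        (((h+1).choose a : ℝ) * (q^a * p^(h+1-a))) * (P b) * sgn a b
      = ∑ b ∈ range (h+1),
        P b * (p * (2 * (∑ a ∈ range (b+1), P a) - 1) + q * (2 * (∑ a ∈ range b, P a) - 1)) := by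
        rw [swap]; exact Finset.sum_congr rfl inner
    _ = ∑ b ∈ range (h+1), (2*p*(P b)^2 + 2*(P b * (∑ a ∈ range b, P a)) - P b) := by
        refine Finset.sum_congr rfl fun b _ => ?_
        rw [Finset.sum_range_succ]
        linear_combination (P b * (2 * (∑ a ∈ range b, P a) - 1)) * hpq
    _ = 2 * p * (∑ b ∈ range (h+1), (P b)^2) + 2 * (∑ b ∈ range (h+1), P b * (∑ a ∈ range b, P a))
        - ∑ b ∈ range (h+1), P b := by
        rw [Finset.sum_sub_distrib, Finset.sum_add_distrib, ← Finset.mul_sum, ← Finset.mul_sum]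
    _ = (p - q) * ∑ k ∈ range (h+1), (P k)^2 := by
        have hl := lambda_sq P (h+1)
        rw [hF, one_pow] at hl
        rw [hF]
        linear_combination hl + (∑ k ∈ range (h+1), P k ^ 2) * hpq

lemma split_sum (p q : ℝ) (h : ℕ) :
    ∑ j ∈ range (2*h+1), q^j * p^(2*h-j)
      = (∑ k ∈ range (h+1), q^(2*k) * p^(2*h-2*k))
        + ∑ k ∈ range h, q^(2*k+1) * p^(2*h-(2*k+1)) := by
  induction h with
  | zero => simp
  | succ h ih =>
    have e1 : ∑ j ∈ range (2*(h+1)+1), q^j * p^(2*(h+1)-j)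
        = p^2 * (∑ j ∈ range (2*h+1), q^j * p^(2*h-j)) + q^(2*h+1) * p + q^(2*h+2) := by
      rw [show 2*(h+1)+1 = (2*h+1)+1+1 by ring]
      rw [Finset.sum_range_succ, Finset.sum_range_succ, Finset.mul_sum]
      have : ∀ j ∈ range (2*h+1), q^j * p^(2*(h+1)-j) = p^2 * (q^j * p^(2*h-j)) := by
        intro j hj
        rw [Finset.mem_range] at hj
        rw [show 2*(h+1)-j = (2*h-j)+2 by omega, pow_add]
        ring
      rw [Finset.sum_congr rfl this]
      rw [show 2*(h+1)-(2*h+1) = 1 by omega, show 2*(h+1)-(2*h+1+1) = 0 by omega]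
      ring_nf
    have e2 : ∑ k ∈ range (h+1+1), q^(2*k) * p^(2*(h+1)-2*k)
        = p^2 * (∑ k ∈ range (h+1), q^(2*k) * p^(2*h-2*k)) + q^(2*h+2) := by
      rw [Finset.sum_range_succ, Finset.mul_sum]
      have : ∀ k ∈ range (h+1), q^(2*k) * p^(2*(h+1)-2*k) = p^2 * (q^(2*k) * p^(2*h-2*k)) := by
        intro k hk
        rw [Finset.mem_range] at hk
        rw [show 2*(h+1)-2*k = (2*h-2*k)+2 by omega, pow_add]
        ring
      rw [Finset.sum_congr rfl this]
      rw [show 2*(h+1)-2*(h+1) = 0 by omega, show 2*(h+1) = 2*h+2 by ring]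
      ring
    have e3 : ∑ k ∈ range (h+1), q^(2*k+1) * p^(2*(h+1)-(2*k+1))
        = p^2 * (∑ k ∈ range h, q^(2*k+1) * p^(2*h-(2*k+1))) + q^(2*h+1) * p := by
      rw [Finset.sum_range_succ, Finset.mul_sum]
      have : ∀ k ∈ range h, q^(2*k+1) * p^(2*(h+1)-(2*k+1)) = p^2 * (q^(2*k+1) * p^(2*h-(2*k+1))) := by
        intro k hk
        rw [Finset.mem_range] at hk
        rw [show 2*(h+1)-(2*k+1) = (2*h-(2*k+1))+2 by omega, pow_add]
        ring
      rw [Finset.sum_congr rfl this]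
      rw [show 2*(h+1)-(2*h+1) = 1 by omega]
      ring
    rw [e1, e2, e3, ih]
    ring

lemma choose_ge_two (h k : ℕ) (h1 : 1 ≤ k) (h2 : k ≤ h - 1) (hh : 2 ≤ h) : 2 ≤ h.choose k := by
  obtain ⟨h', rfl⟩ : ∃ h', h = h' + 1 := ⟨h - 1, by omega⟩
  obtain ⟨k', rfl⟩ : ∃ k', k = k' + 1 := ⟨k - 1, by omega⟩
  rw [Nat.choose_succ_succ]
  have p1 : 0 < h'.choose k' := Nat.choose_pos (by omega)
  have p2 : 0 < h'.choose (k'+1) := Nat.choose_pos (by omega)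
  show 2 ≤ h'.choose k' + h'.choose (k'+1)
  omega

lemma core_ineq (h : ℕ) (hh : 2 ≤ h) (p q : ℝ) (hq0 : 0 < q) (hqp : q < p) (hpq : p + q = 1)
    (hbig : 1 < ((h:ℝ)^2 - 1) * q) :
    ∑ j ∈ range (2*h+1), q^j * p^(2*h-j)
      < ∑ k ∈ range (h+1), ((h.choose k : ℝ) * (q^k * p^(h-k)))^2 := by
  have hp0 : 0 < p := lt_trans hq0 hqp
  have hrhs : ∑ k ∈ range (h+1), ((h.choose k : ℝ) * (q^k * p^(h-k)))^2
      = ∑ k ∈ range (h+1), ((h.choose k : ℝ))^2 * (q^(2*k) * p^(2*h-2*k)) := by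
    refine Finset.sum_congr rfl fun k hk => ?_
    rw [Finset.mem_range] at hk
    rw [mul_pow, mul_pow, ← pow_mul, ← pow_mul, show k*2 = 2*k by ring,
      show (h-k)*2 = 2*h-2*k by omega]
  rw [hrhs, split_sum]
  have key : ∑ k ∈ range h, q^(2*k+1) * p^(2*h-(2*k+1))
      < ∑ k ∈ range (h+1), (((h.choose k : ℝ))^2 - 1) * (q^(2*k) * p^(2*h-2*k)) := by
    have lhs_eq : ∑ k ∈ range (h+1), (((h.choose k : ℝ))^2 - 1) * (q^(2*k) * p^(2*h-2*k))
        = ∑ k ∈ range (h-1), (((h.choose (k+1) : ℝ))^2 - 1) * (q^(2*(k+1)) * p^(2*h-2*(k+1))) := by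
      rw [Finset.sum_range_succ' (fun k => (((h.choose k : ℝ))^2 - 1) * (q^(2*k) * p^(2*h-2*k))) h]
      rw [show (((h.choose 0 : ℝ))^2 - 1) = 0 by simp, zero_mul, add_zero]
      rw [show h = (h-1)+1 by omega]
      rw [Finset.sum_range_succ (fun k => (((((h-1)+1).choose (k+1) : ℝ))^2 - 1) * (q^(2*(k+1)) * p^(2*((h-1)+1)-2*(k+1)))) (h-1)]
      rw [show ((h-1)+1).choose ((h-1)+1) = 1 by simp, Nat.add_sub_cancel]
      norm_num
    have rhs_eq : ∑ k ∈ range h, q^(2*k+1) * p^(2*h-(2*k+1))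
        = (∑ k ∈ range (h-1), q^(2*(k+1)+1) * p^(2*h-(2*(k+1)+1))) + q^(2*0+1) * p^(2*h-(2*0+1)) := by
      rw [show h = (h-1)+1 by omega]
      rw [Finset.sum_range_succ' (fun k => q^(2*k+1) * p^(2*((h-1)+1)-(2*k+1))) (h-1)]
      try rw [Nat.add_sub_cancel]
    rw [lhs_eq, rhs_eq]
    have combined : (∑ k ∈ range (h-1), q^(2*(k+1)+1) * p^(2*h-(2*(k+1)+1))) + q^(2*0+1) * p^(2*h-(2*0+1))
        = ∑ k ∈ range (h-1), (q^(2*(k+1)+1) * p^(2*h-(2*(k+1)+1)) + if k = 0 then q^1 * p^(2*h-1) else 0) := by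
      rw [Finset.sum_add_distrib, Finset.sum_ite_eq' (range (h-1)) 0 (fun _ => q^1 * p^(2*h-1))]
      rw [if_pos (Finset.mem_range.2 (by omega))]
    rw [combined]
    apply Finset.sum_lt_sum_of_nonempty (by rw [Finset.nonempty_range_iff]; omega)
    intro k hk
    rw [Finset.mem_range] at hk
    by_cases hk0 : k = 0
    · subst hk0
      rw [if_pos rfl]
      have hc : ((h.choose 1 : ℝ)) = (h : ℝ) := by rw [Nat.choose_one_right]
      rw [hc]
      have e1 : q^(2*(0+1)+1) * p^(2*h-(2*(0+1)+1)) = q^3 * p^(2*h-3) := by norm_num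
      have e2 : q^1 * p^(2*h-1) = q * (p^2 * p^(2*h-3)) := by
        rw [show 2*h-1 = (2*h-3)+2 by omega, pow_add]; ring
      have e3 : q^(2*(0+1)) * p^(2*h-2*(0+1)) = q^2 * (p * p^(2*h-3)) := by
        rw [show 2*h-2*(0+1) = (2*h-3)+1 by omega, pow_add]; ring
      rw [e1, e2, e3]
      have hx : 0 < p^(2*h-3) := pow_pos hp0 _
      have f1 : p < ((h:ℝ)^2-1)*q*p := by nlinarith [hbig, hp0]
      have f2 : p^2 + q^2 < p := by nlinarith [hpq, hqp, hq0]
      have main : (p^2 + q^2) * (q * p^(2*h-3)) < (((h:ℝ)^2-1)*q*p) * (q * p^(2*h-3)) :=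
        mul_lt_mul_of_pos_right (lt_trans f2 f1) (mul_pos hq0 hx)
      nlinarith [main]
    · rw [if_neg hk0]
      rw [add_zero]
      have hcb : 2 ≤ h.choose (k+1) := choose_ge_two h (k+1) (by omega) (by omega) hh
      have hcb' : (2:ℝ) ≤ (h.choose (k+1) : ℝ) := by exact_mod_cast hcb
      set m := 2*h-2*(k+1)-1 with hm
      have e1 : q^(2*(k+1)+1) * p^(2*h-(2*(k+1)+1)) = q * (q^(2*(k+1)) * p^m) := by
        rw [show 2*h-(2*(k+1)+1) = m by omega, pow_succ]
        ring
      have e2 : q^(2*(k+1)) * p^(2*h-2*(k+1)) = p * (q^(2*(k+1)) * p^m) := by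
        rw [show 2*h-2*(k+1) = m+1 by omega, pow_add]
        ring
      rw [e1, e2]
      have hx : 0 < q^(2*(k+1)) * p^m := mul_pos (pow_pos hq0 _) (pow_pos hp0 _)
      have g1 : q * (q^(2*(k+1)) * p^m) < p * (q^(2*(k+1)) * p^m) := by
        exact mul_lt_mul_of_pos_right hqp hx
      have g2 : (1:ℝ) ≤ ((h.choose (k+1) : ℝ))^2 - 1 := by nlinarith [hcb']
      nlinarith [g1, g2, mul_pos hp0 hx]
  have hev : ∀ k ∈ range (h+1), (((h.choose k : ℝ))^2) * (q^(2*k) * p^(2*h-2*k))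
      = (q^(2*k) * p^(2*h-2*k)) + (((h.choose k : ℝ))^2 - 1) * (q^(2*k) * p^(2*h-2*k)) := by
    intro k _; ring
  rw [Finset.sum_congr rfl hev, Finset.sum_add_distrib]
  linarith [key]

lemma maj_neg (n : ℕ) (y : Fin n → Bool) : maj n (fun i => !(y i)) = - maj n y := by
  unfold maj
  have : ∀ i, chi (!(y i)) = - chi (y i) := by intro i; cases y i <;> simp [chi]
  rw [Finset.sum_congr rfl (fun i _ => this i), Finset.sum_neg_distrib, Real.sign_neg]

lemma maj_eVec (n h : ℕ) (hn : n = 2*h+1) : maj n (eVec n) = 1 := by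
  unfold maj
  have hc : ∀ i : Fin n, chi (eVec n i) = if (i:ℕ) < h+1 then (1:ℝ) else -1 := by
    intro i
    unfold eVec chi
    rw [show (n-1)/2 = h by omega]
    by_cases hi : (i:ℕ) < h+1 <;> simp [hi]
  rw [Finset.sum_congr rfl (fun i _ => hc i)]
  rw [Fin.sum_univ_eq_sum_range (fun j => if j < h+1 then (1:ℝ) else -1) n]
  rw [Finset.range_eq_Ico, ← Finset.sum_Ico_consecutive _ (Nat.zero_le (h+1)) (by omega : h+1 ≤ n)]
  have e1 : ∑ j ∈ Finset.Ico 0 (h+1), (if j < h+1 then (1:ℝ) else -1) = (h+1 : ℝ) := by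
    rw [Finset.sum_congr rfl (g := fun _ => (1:ℝ)) (fun j hj => by
      rw [Finset.mem_Ico] at hj; simp [hj.2]), Finset.sum_const]
    simp [Nat.card_Ico]
  have e2 : ∑ j ∈ Finset.Ico (h+1) n, (if j < h+1 then (1:ℝ) else -1) = -(h : ℝ) := by
    rw [Finset.sum_congr rfl (g := fun _ => (-1:ℝ)) (fun j hj => by
      rw [Finset.mem_Ico] at hj; rw [if_neg (by omega)]), Finset.sum_const]
    rw [Nat.card_Ico, show n - (h+1) = h by omega]
    simp
  rw [e1, e2]
  apply Real.sign_of_pos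
  norm_num

lemma e_ne (n : ℕ) (hn : 0 < n) : eVec n ≠ (fun i => !(eVec n i)) := by
  intro hcontra
  have := congrFun hcontra ⟨0, hn⟩
  simp [eVec] at this

lemma gfun_eq (n : ℕ) (x : Fin n → Bool) :
    gfun n x = (if x = eVec n ∨ x = (fun i => !(eVec n i)) then (-1:ℝ) else 1) * maj n x := by
  unfold gfun; split <;> ring

lemma ind_sum {X : Type*} [Fintype X] [DecidableEq X] (a b : X) (hab : a ≠ b) (G : X → ℝ) :
    ∑ x : X, (if x = a ∨ x = b then (1:ℝ) else 0) * G x = G a + G b := by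
  classical
  have : ∀ x : X, (if x = a ∨ x = b then (1:ℝ) else 0) * G x
      = if x ∈ ({a, b} : Finset X) then G x else 0 := by
    intro x
    by_cases hx : x = a ∨ x = b
    · rw [if_pos hx, if_pos (by simp [hx, Finset.mem_insert, Finset.mem_singleton]), one_mul]
    · rw [if_neg hx, if_neg (by simp only [Finset.mem_insert, Finset.mem_singleton]; exact hx), zero_mul]
  rw [Finset.sum_congr rfl (fun x _ => this x), Finset.sum_ite_mem, Finset.univ_inter,
    Finset.sum_pair hab]

lemma xor_invol (n : ℕ) (x : Fin n → Bool) :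
    Function.Involutive (fun z : Fin n → Bool => (fun i => xor (x i) (z i))) := by
  intro z; funext i; cases hx : x i <;> cases hz : z i <;> simp [hx, hz]

lemma sum_xor (n : ℕ) (x : Fin n → Bool) (F : (Fin n → Bool) → ℝ) :
    ∑ z : Fin n → Bool, F (fun i => xor (x i) (z i)) = ∑ z : Fin n → Bool, F z :=
  Equiv.sum_comp (xor_invol n x).toPerm F

lemma neg_invol (n : ℕ) : Function.Involutive (fun z : Fin n → Bool => (fun i => !(z i))) := by
  intro z; funext i; simp

lemma stab_sub (n h : ℕ) (hn : n = 2*h+1) (ρ : ℝ) :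
    stab n ρ (maj n) - stab n ρ (gfun n)
      = (8 / 2^n) * ((∑ z : Fin n → Bool, (∏ i, if z i then (1-ρ)/2 else (1+ρ)/2)
            * maj n (fun i => xor (eVec n i) (z i)))
          - ((1+ρ)/2)^n + ((1-ρ)/2)^n) := by
  classical
  set p : ℝ := (1+ρ)/2 with hp
  set q : ℝ := (1-ρ)/2 with hq
  set e : Fin n → Bool := eVec n with he
  set ebar : Fin n → Bool := fun i => !(eVec n i) with hebar
  have hne : e ≠ ebar := e_ne n (by omega)
  set M : (Fin n → Bool) → ℝ := maj n with hM
  set W : (Fin n → Bool) → (Fin n → Bool) → ℝ :=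
    fun x y => ∏ i, if xor (x i) (y i) then q else p with hW
  set c : (Fin n → Bool) → ℝ := fun x => if x = e ∨ x = ebar then (1:ℝ) else 0 with hc
  have hWx : ∀ x z : Fin n → Bool, W x (fun i => xor (x i) (z i)) = (∏ i, if z i then q else p) := by
    intro x z
    simp only [hW]
    refine Finset.prod_congr rfl fun i _ => ?_
    have hb : (x i ^^ (x i ^^ z i)) = z i := by cases x i <;> cases z i <;> rfl
    rw [hb]
  -- stab as double sum over pairs
  have hsum : ∀ f : (Fin n → Bool) → ℝ,
      stab n ρ f = (1/2^n) * ∑ x : Fin n → Bool, ∑ y : Fin n → Bool, W x y * (f x * f y) := by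
    intro f
    unfold stab
    rw [← hp, ← hq]
    congr 1
    refine Finset.sum_congr rfl fun x _ => ?_
    have h1 : ∀ z : Fin n → Bool, (∏ i, if z i then q else p) * (f x * f (fun i => xor (x i) (z i)))
        = (fun y => W x y * (f x * f y)) (fun i => xor (x i) (z i)) := by
      intro z
      show (∏ i, if z i then q else p) * (f x * f (fun i => xor (x i) (z i)))
        = W x (fun i => xor (x i) (z i)) * (f x * f (fun i => xor (x i) (z i)))
      rw [hWx x z]
    rw [Finset.sum_congr rfl (fun z _ => h1 z), sum_xor n x (fun y => W x y * (f x * f y))]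
  have hWsymm : ∀ x y : Fin n → Bool, W x y = W y x := by
    intro x y
    simp only [hW]
    refine Finset.prod_congr rfl fun i _ => ?_
    have hb : (x i ^^ y i) = (y i ^^ x i) := Bool.xor_comm _ _
    rw [hb]
  have hMe : M e = 1 := maj_eVec n h hn
  have hMneg : ∀ y : Fin n → Bool, M (fun i => !(y i)) = - M y := fun y => maj_neg n y
  have hMebar : M ebar = -1 := by
    rw [hebar, hM, maj_neg n (eVec n), ← he, ← hM, hMe]
  -- pointwise identity
  have key : ∀ x y : Fin n → Bool, W x y * (M x * M y) - W x y * (gfun n x * gfun n y)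
      = 2 * (c x * (M x * (W x y * M y))) + 2 * (c y * ((W x y * M x) * M y))
        - 4 * (c x * (c y * (W x y * (M x * M y)))) := by
    intro x y
    rw [gfun_eq n x, gfun_eq n y, ← he, ← hebar, ← hM]
    simp only [hc]
    by_cases hx : x = e ∨ x = ebar <;> by_cases hy : y = e ∨ y = ebar <;>
      simp only [if_pos, if_neg, hx, hy, ite_true, ite_false] <;> ring
  -- the three sums
  have hTe := (∑ y : Fin n → Bool, W e y * M y)
  set Te : ℝ := ∑ y : Fin n → Bool, W e y * M y with hTedef
  have hTebar : ∑ y : Fin n → Bool, W ebar y * M y = - Te := by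
    have step : ∀ y : Fin n → Bool, (fun y => W ebar y * M y) (fun i => !(y i))
        = -(W e y * M y) := by
      intro y
      show W ebar (fun i => !(y i)) * M (fun i => !(y i)) = -(W e y * M y)
      have hWe : W ebar (fun i => !(y i)) = W e y := by
        simp only [hW, hebar, he]
        refine Finset.prod_congr rfl fun i _ => ?_
        have hb : ((!eVec n i) ^^ (!(y i))) = (eVec n i ^^ y i) := by
          cases eVec n i <;> cases y i <;> rfl
        rw [hb]
      rw [hWe, hMneg y]
      ring
    set P := Function.Involutive.toPerm _ (neg_invol n) with hP
    have hsc := Equiv.sum_comp P (fun y => W ebar y * M y)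
    have hPy : ∀ y : Fin n → Bool, P y = (fun i => !(y i)) := fun y => rfl
    rw [hTedef]
    calc ∑ y : Fin n → Bool, W ebar y * M y
        = ∑ y : Fin n → Bool, (fun y => W ebar y * M y) (P y) := hsc.symm
      _ = ∑ y : Fin n → Bool, -(W e y * M y) := Finset.sum_congr rfl fun y _ => by
          rw [hPy y]; exact step y
      _ = - ∑ y : Fin n → Bool, W e y * M y := by rw [Finset.sum_neg_distrib]
  have hS1 : ∑ x : Fin n → Bool, ∑ y : Fin n → Bool, c x * (M x * (W x y * M y)) = 2 * Te := by
    have inner : ∀ x : Fin n → Bool, ∑ y : Fin n → Bool, c x * (M x * (W x y * M y))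
        = c x * (M x * ∑ y : Fin n → Bool, W x y * M y) := by
      intro x
      rw [Finset.mul_sum, Finset.mul_sum]
    rw [Finset.sum_congr rfl (fun x _ => inner x)]
    simp only [hc]
    rw [ind_sum e ebar hne (fun x => M x * ∑ y : Fin n → Bool, W x y * M y)]
    rw [hTebar, ← hTedef, hMe, hMebar]
    ring
  have hS2 : ∑ x : Fin n → Bool, ∑ y : Fin n → Bool, c y * ((W x y * M x) * M y)
      = ∑ x : Fin n → Bool, ∑ y : Fin n → Bool, c x * (M x * (W x y * M y)) := by
    rw [Finset.sum_comm]
    refine Finset.sum_congr rfl fun x _ => Finset.sum_congr rfl fun y _ => ?_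
    rw [hWsymm y x]
    ring
  -- values of W on the special points
  have hWee : W e e = p ^ n := by
    simp only [hW]
    have : ∀ i : Fin n, (if (e i ^^ e i) = true then q else p) = p := by
      intro i
      have hb : (e i ^^ e i) = false := by cases e i <;> rfl
      rw [hb]
      simp
    rw [Finset.prod_congr rfl (fun i _ => this i), Finset.prod_const]
    simp
  have hWbb : W ebar ebar = p ^ n := by
    simp only [hW]
    have : ∀ i : Fin n, (if (ebar i ^^ ebar i) = true then q else p) = p := by
      intro i
      have hb : (ebar i ^^ ebar i) = false := by cases (ebar i) <;> rfl
      rw [hb]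
      simp
    rw [Finset.prod_congr rfl (fun i _ => this i), Finset.prod_const]
    simp
  have hWeb : W e ebar = q ^ n := by
    simp only [hW, he, hebar]
    have : ∀ i : Fin n, (if (eVec n i ^^ !(eVec n i)) = true then q else p) = q := by
      intro i
      have hb : (eVec n i ^^ !(eVec n i)) = true := by cases (eVec n i) <;> rfl
      rw [hb]
      simp
    rw [Finset.prod_congr rfl (fun i _ => this i), Finset.prod_const]
    simp
  have hWbe : W ebar e = q ^ n := by rw [← hWsymm e ebar]; exact hWeb
  have hS3 : ∑ x : Fin n → Bool, ∑ y : Fin n → Bool, c x * (c y * (W x y * (M x * M y)))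
      = 2 * p ^ n - 2 * q ^ n := by
    have inner : ∀ x : Fin n → Bool, ∑ y : Fin n → Bool, c x * (c y * (W x y * (M x * M y)))
        = c x * (W x e * (M x * M e) + W x ebar * (M x * M ebar)) := by
      intro x
      rw [← Finset.mul_sum]
      congr 1
      simp only [hc]
      rw [ind_sum e ebar hne (fun y => W x y * (M x * M y))]
    rw [Finset.sum_congr rfl (fun x _ => inner x)]
    simp only [hc]
    rw [ind_sum e ebar hne (fun x => W x e * (M x * M e) + W x ebar * (M x * M ebar))]
    rw [hWee, hWeb, hWbe, hWbb, hMe, hMebar]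
    ring
  -- Tsum conversion
  have hTsum : ∑ z : Fin n → Bool, (∏ i, if z i then q else p) * M (fun i => xor (e i) (z i))
      = Te := by
    have h1 : ∀ z : Fin n → Bool, (∏ i, if z i then q else p) * M (fun i => xor (e i) (z i))
        = (fun y => W e y * M y) (fun i => xor (e i) (z i)) := by
      intro z
      show (∏ i, if z i then q else p) * M (fun i => xor (e i) (z i))
        = W e (fun i => xor (e i) (z i)) * M (fun i => xor (e i) (z i))
      rw [hWx e z]
    rw [Finset.sum_congr rfl (fun z _ => h1 z), sum_xor n e (fun y => W e y * M y)]
  -- final assembly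
  rw [hsum (maj n), hsum (gfun n), ← hM]
  rw [← mul_sub, ← Finset.sum_sub_distrib]
  have hsplit : ∑ x : Fin n → Bool,
      (∑ y : Fin n → Bool, W x y * (M x * M y) - ∑ y : Fin n → Bool, W x y * (gfun n x * gfun n y))
      = 2 * (2 * Te) + 2 * (2 * Te) - 4 * (2 * p ^ n - 2 * q ^ n) := by
    have step : ∀ x : Fin n → Bool,
        (∑ y : Fin n → Bool, W x y * (M x * M y) - ∑ y : Fin n → Bool, W x y * (gfun n x * gfun n y))
        = ∑ y : Fin n → Bool,
            (2 * (c x * (M x * (W x y * M y))) + 2 * (c y * ((W x y * M x) * M y))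
              - 4 * (c x * (c y * (W x y * (M x * M y))))) := by
      intro x
      rw [← Finset.sum_sub_distrib]
      exact Finset.sum_congr rfl fun y _ => key x y
    have pull : ∀ (F : (Fin n → Bool) → (Fin n → Bool) → ℝ) (k : ℝ),
        ∑ x : Fin n → Bool, ∑ y : Fin n → Bool, k * F x y
          = k * ∑ x : Fin n → Bool, ∑ y : Fin n → Bool, F x y := by
      intro F k
      rw [Finset.mul_sum]
      exact Finset.sum_congr rfl fun x _ => (Finset.mul_sum _ _ _).symm
    calc ∑ x : Fin n → Bool,
        (∑ y : Fin n → Bool, W x y * (M x * M y) - ∑ y : Fin n → Bool, W x y * (gfun n x * gfun n y))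
        = ∑ x : Fin n → Bool, ∑ y : Fin n → Bool,
            (2 * (c x * (M x * (W x y * M y))) + 2 * (c y * ((W x y * M x) * M y))
              - 4 * (c x * (c y * (W x y * (M x * M y))))) := Finset.sum_congr rfl fun x _ => step x
      _ = (∑ x : Fin n → Bool, ∑ y : Fin n → Bool, 2 * (c x * (M x * (W x y * M y))))
          + (∑ x : Fin n → Bool, ∑ y : Fin n → Bool, 2 * (c y * ((W x y * M x) * M y)))
          - (∑ x : Fin n → Bool, ∑ y : Fin n → Bool, 4 * (c x * (c y * (W x y * (M x * M y))))) := by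
          rw [← Finset.sum_add_distrib, ← Finset.sum_sub_distrib]
          exact Finset.sum_congr rfl fun x _ => by
            rw [Finset.sum_sub_distrib, Finset.sum_add_distrib]
      _ = 2 * (2 * Te) + 2 * (2 * Te) - 4 * (2 * p ^ n - 2 * q ^ n) := by
          rw [pull, pull, pull, hS1, hS2, hS1, hS3]
  rw [hsplit, ← hTsum]
  ring

theorem stmt0 (n : ℕ) (hodd : Odd n) (hn : 5 ≤ n)
    (ρ : ℝ) (hρ0 : 0 < ρ) (hρ1 : ρ < 1 - 2 * (4 / (((n : ℝ) - 3) ^ 2 + 6))) :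
    stab n ρ (gfun n) < stab n ρ (maj n) := by
  classical
  obtain ⟨h, hh⟩ := hodd
  have hn21 : n = 2*h+1 := by omega
  have hh2 : 2 ≤ h := by omega
  set p : ℝ := (1+ρ)/2 with hp
  set q : ℝ := (1-ρ)/2 with hq
  have hD : (0:ℝ) < ((n : ℝ) - 3) ^ 2 + 6 := by positivity
  have hρlt1 : ρ < 1 := by
    have : 0 < 2 * (4 / (((n : ℝ) - 3) ^ 2 + 6)) := by positivity
    linarith
  have hq0 : 0 < q := by rw [hq]; linarith
  have hqp : q < p := by rw [hq, hp]; linarith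
  have hpq : p + q = 1 := by rw [hq, hp]; ring
  have hp0 : 0 < p := lt_trans hq0 hqp
  have hcastn : (n:ℝ) = 2*(h:ℝ)+1 := by rw [hn21]; push_cast; ring
  have hcasth : (2:ℝ) ≤ (h:ℝ) := by exact_mod_cast hh2
  have hε : 4 / (((n : ℝ) - 3) ^ 2 + 6) < q := by rw [hq]; linarith
  have hqD : 4 < q * (((n : ℝ) - 3) ^ 2 + 6) := (div_lt_iff₀ hD).mp hε
  have hbig : 1 < ((h:ℝ)^2 - 1) * q := by
    have k0 : (0:ℝ) < (h:ℝ)^2 - 1 := by nlinarith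
    have k1 : ((h:ℝ)^2 - 1) * 4 < ((h:ℝ)^2 - 1) * (q * (((n : ℝ) - 3) ^ 2 + 6)) :=
      mul_lt_mul_of_pos_left hqD k0
    have k2 : (((n : ℝ) - 3) ^ 2 + 6) ≤ 4 * ((h:ℝ)^2 - 1) := by nlinarith [hcastn, hcasth]
    nlinarith [k1, k2, hD, mul_pos (mul_pos k0 hq0) hD]
  -- the core quantities
  have hnsum : (h+1) + h = n := by omega
  have hTs := tsum_eq h n hnsum p q
  have hS2 := S2_eq h p q hpq
  have hgeom := geom_sum₂_mul q p n
  have hR : ∑ i ∈ Finset.range n, q^i * p^(n-1-i)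
      = ∑ j ∈ Finset.range (2*h+1), q^j * p^(2*h-j) := by
    rw [hn21]
    exact Finset.sum_congr rfl fun i _ => by rw [show 2*h+1-1-i = 2*h-i by omega]
  have hpq_pow : p^n - q^n = (p - q) * ∑ j ∈ Finset.range (2*h+1), q^j * p^(2*h-j) := by
    have : (∑ i ∈ Finset.range n, q^i * p^(n-1-i)) * (q - p) = q^n - p^n := hgeom
    rw [hR] at this
    nlinarith [this]
  have hcore := core_ineq h hh2 p q hq0 hqp hpq hbig
  have hmaj_eq : ∀ z : Fin n → Bool,
      maj n (fun i => xor (eVec n i) (z i))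
        = Real.sign (∑ i, chi (xor (eVec n i) (z i))) := fun z => rfl
  have hTsum_val : (∑ z : Fin n → Bool, (∏ i, if z i then (1-ρ)/2 else (1+ρ)/2)
        * maj n (fun i => xor (eVec n i) (z i)))
      = (p - q) * ∑ k ∈ Finset.range (h+1), ((h.choose k : ℝ) * (q^k * p^(h-k)))^2 := by
    rw [← hS2, ← hTs]
    exact Finset.sum_congr rfl fun z _ => by rw [hmaj_eq z, ← hp, ← hq]
  have hdiff := stab_sub n h hn21 ρ
  rw [hTsum_val, ← hp, ← hq] at hdiff
  have hpos : 0 < stab n ρ (maj n) - stab n ρ (gfun n) := by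
    rw [hdiff]
    have h8 : (0:ℝ) < 8 / 2^n := by positivity
    have hρpq : p - q = ρ := by rw [hp, hq]; ring
    have hmain : 0 < (p - q) * ∑ k ∈ Finset.range (h+1), ((h.choose k : ℝ) * (q^k * p^(h-k)))^2
        - p^n + q^n := by
      have hR2 := mul_lt_mul_of_pos_left hcore (show (0:ℝ) < p - q by linarith)
      linarith [hpq_pow, hR2]
    exact mul_pos h8 hmain
  linarith
end

section
/- For every odd integer n ≥ 5 with h = (n-1)/2, and for all odd positive integers a, b satisfying b·h > a·(h+1) and b·(h-2) < a·(h-1), the function g_n satisfies g_n(x) = sign(a·∑_{i∈A} x_i + b·∑_{i∈B} x_i) for every x ∈ {-1,1}^n (in particular the linear form is never zero); moreover g_n is odd (g_n(-x) = -g_n(x) for all x) and unbiased (E_{x uniform}[g_n(x)] = 0). -/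
open Finset

lemma sum_pm_le {ι : Type*} (s : Finset ι) (x : ι → Bool) :
    (∑ i ∈ s, (if x i then (1:ℤ) else -1)) ≤ s.card := by
  calc (∑ i ∈ s, (if x i then (1:ℤ) else -1)) ≤ ∑ i ∈ s, 1 :=
        Finset.sum_le_sum (fun i _ => by split <;> omega)
    _ = s.card := by simp

lemma neg_card_le_sum_pm {ι : Type*} (s : Finset ι) (x : ι → Bool) :
    -(s.card : ℤ) ≤ ∑ i ∈ s, (if x i then (1:ℤ) else -1) := by
  have : (∑ i ∈ s, (-1:ℤ)) ≤ ∑ i ∈ s, (if x i then (1:ℤ) else -1) :=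
    Finset.sum_le_sum (fun i _ => by split <;> omega)
  simpa using this

lemma all_true_of_sum_eq {ι : Type*} (s : Finset ι) (x : ι → Bool)
    (h : (∑ i ∈ s, (if x i then (1:ℤ) else -1)) = s.card) :
    ∀ i ∈ s, x i = true := by
  by_contra hc
  push_neg at hc
  obtain ⟨j, hjs, hj⟩ := hc
  have : (∑ i ∈ s, (if x i then (1:ℤ) else -1)) < ∑ i ∈ s, 1 := by
    apply Finset.sum_lt_sum (fun i _ => by split <;> omega)
    exact ⟨j, hjs, by simp [hj]⟩
  simp [h] at this

lemma all_false_of_sum_eq {ι : Type*} (s : Finset ι) (x : ι → Bool)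
    (h : (∑ i ∈ s, (if x i then (1:ℤ) else -1)) = -(s.card : ℤ)) :
    ∀ i ∈ s, x i = false := by
  by_contra hc
  push_neg at hc
  obtain ⟨j, hjs, hj⟩ := hc
  rw [Bool.ne_false_iff] at hj
  have : (∑ i ∈ s, (-1:ℤ)) < ∑ i ∈ s, (if x i then (1:ℤ) else -1) := by
    apply Finset.sum_lt_sum (fun i _ => by split <;> omega)
    exact ⟨j, hjs, by simp [hj]⟩
  simp [h] at this

lemma sum_pm_parity {ι : Type*} (s : Finset ι) (x : ι → Bool) :
    ((∑ i ∈ s, (if x i then (1:ℤ) else -1) : ℤ) : ZMod 2) = s.card := by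
  push_cast
  calc (∑ i ∈ s, (if x i then (1:ZMod 2) else -1)) = ∑ i ∈ s, 1 :=
        Finset.sum_congr rfl (fun i _ => by split <;> decide)
    _ = s.card := by simp

lemma odd_cast_zmod (a : ℕ) (ha : Odd a) : ((a : ℕ) : ZMod 2) = 1 := by
  obtain ⟨k, hk⟩ := ha
  subst hk
  push_cast
  have : (2 : ZMod 2) = 0 := by decide
  rw [this]; ring

lemma keypos (m a b SA SB : ℤ) (ha0 : 0 < a)
    (hab1 : a*(m+1) < b*m) (hab2 : b*(m-2) < a*(m-1)) (hm : 2 ≤ m)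
    (hSB : -(m-2) ≤ SB) (hS : 0 < SA + SB) : 0 < a*SA + b*SB := by
  have hba : a < b := by nlinarith
  nlinarith [mul_nonneg (by linarith : (0:ℤ) ≤ b - a) (by linarith : (0:ℤ) ≤ SB + (m-2)),
    mul_nonneg ha0.le (by linarith : (0:ℤ) ≤ SA + SB - 1)]

lemma chi_sum_cast {ι : Type*} (s : Finset ι) (x : ι → Bool) :
    ∑ i ∈ s, chi (x i) = ((∑ i ∈ s, (if x i then (1:ℤ) else -1) : ℤ) : ℝ) := by
  push_cast
  exact Finset.sum_congr rfl (fun i _ => by by_cases h : x i <;> simp [chi, h])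

set_option maxHeartbeats 1000000 in
theorem stmt2 (n : ℕ) (hodd : Odd n) (hn : 5 ≤ n)
    (a b : ℕ) (ha : Odd a) (hb : Odd b) (ha0 : 0 < a) (hb0 : 0 < b)
    (hab1 : b * ((n - 1) / 2) > a * ((n - 1) / 2 + 1))
    (hab2 : b * ((n - 1) / 2 - 2) < a * ((n - 1) / 2 - 1)) :
    (∀ x : Fin n → Bool,
      (a : ℝ) * (∑ i ∈ univ.filter (fun i : Fin n => (i : ℕ) < (n - 1) / 2 + 1), chi (x i))
        + (b : ℝ) * (∑ i ∈ univ.filter (fun i : Fin n => ¬ ((i : ℕ) < (n - 1) / 2 + 1)), chi (x i)) ≠ 0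
      ∧ gfun n x = Real.sign ((a : ℝ) * (∑ i ∈ univ.filter (fun i : Fin n => (i : ℕ) < (n - 1) / 2 + 1), chi (x i))
          + (b : ℝ) * (∑ i ∈ univ.filter (fun i : Fin n => ¬ ((i : ℕ) < (n - 1) / 2 + 1)), chi (x i))))
    ∧ (∀ x : Fin n → Bool, gfun n (fun i => ! (x i)) = - gfun n x)
    ∧ (∑ x : Fin n → Bool, gfun n x) = 0 := by
  obtain ⟨m, hm⟩ := hodd
  have hmn : (n - 1) / 2 = m := by omega
  have hm2 : 2 ≤ m := by omega
  have hmn1 : m + 1 < n := by omega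
  set A := univ.filter (fun i : Fin n => (i : ℕ) < (n - 1) / 2 + 1) with hA
  set B := univ.filter (fun i : Fin n => ¬ ((i : ℕ) < (n - 1) / 2 + 1)) with hB
  have cardA : A.card = m + 1 := by
    have h1 : A = Finset.Iio (⟨m + 1, hmn1⟩ : Fin n) := by
      rw [hA]; ext i; simp [Fin.lt_def, hmn]
    rw [h1, Fin.card_Iio]
  have cardB : B.card = m := by
    have h1 : B = Aᶜ := by rw [hA, hB, Finset.compl_filter]
    rw [h1, Finset.card_compl, cardA]
    simp only [Fintype.card_fin]
    omega
  have haZ : (0 : ℤ) < (a : ℤ) := by exact_mod_cast ha0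
  have habZ1 : (a : ℤ) * ((m : ℤ) + 1) < (b : ℤ) * (m : ℤ) := by
    rw [hmn] at hab1; exact_mod_cast hab1
  have habZ2 : (b : ℤ) * ((m : ℤ) - 2) < (a : ℤ) * ((m : ℤ) - 1) := by
    rw [hmn] at hab2
    zify [hm2, show 1 ≤ m by omega] at hab2
    exact hab2
  have h2zero : (2 : ZMod 2) = 0 := by decide
  -- oddness of gfun
  have hoddg : ∀ x : Fin n → Bool, gfun n (fun i => ! (x i)) = - gfun n x := by
    intro x
    have hmaj : maj n (fun i => !(x i)) = - maj n x := by
      unfold maj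
      have : (∑ i, chi (!(x i))) = - ∑ i, chi (x i) := by
        rw [← Finset.sum_neg_distrib]
        exact Finset.sum_congr rfl fun i _ => by cases h : x i <;> simp [chi, h]
      rw [this, Real.sign_neg]
    have hflip : ∀ (u v : Fin n → Bool), ((fun i => !(u i)) = v) ↔ (u = fun i => !(v i)) := by
      intro u v
      constructor
      · intro h; funext i
        have h1 := congrFun h i
        cases hui : u i <;> cases hvi : v i <;> simp_all
      · intro h; funext i
        have h1 := congrFun h i
        cases hui : u i <;> cases hvi : v i <;> simp_all
    have hcond : ((fun i => !(x i)) = eVec n ∨ (fun i => !(x i)) = fun i => !(eVec n i)) ↔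
        (x = eVec n ∨ x = fun i => !(eVec n i)) := by
      rw [hflip x (eVec n), hflip x (fun i => !(eVec n i))]
      have h1 : (fun i => !(!(eVec n i))) = eVec n := funext fun i => Bool.not_not _
      rw [h1]
      tauto
    unfold gfun
    by_cases hc : x = eVec n ∨ x = fun i => !(eVec n i)
    · rw [if_pos (hcond.mpr hc), if_pos hc, hmaj]
    · rw [if_neg (fun hp => hc (hcond.mp hp)), if_neg hc, hmaj]
  refine ⟨?_, hoddg, ?_⟩
  · intro x
    set SA := ∑ i ∈ A, (if x i then (1:ℤ) else -1) with hSA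
    set SB := ∑ i ∈ B, (if x i then (1:ℤ) else -1) with hSB
    have hRA : ∑ i ∈ A, chi (x i) = (SA : ℝ) := chi_sum_cast A x
    have hRB : ∑ i ∈ B, chi (x i) = (SB : ℝ) := chi_sum_cast B x
    set L := (a : ℤ) * SA + (b : ℤ) * SB with hL
    have hcast : (a : ℝ) * (∑ i ∈ A, chi (x i)) + (b : ℝ) * (∑ i ∈ B, chi (x i)) = (L : ℝ) := by
      rw [hRA, hRB, hL]; push_cast; ring
    have hparA : ((SA : ℤ) : ZMod 2) = ((m : ZMod 2) + 1) := by
      rw [hSA, sum_pm_parity, cardA]; push_cast; ring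
    have hparB : ((SB : ℤ) : ZMod 2) = (m : ZMod 2) := by
      rw [hSB, sum_pm_parity, cardB]
    have hLpar : ((L : ℤ) : ZMod 2) = 1 := by
      have h1 : ((L : ℤ) : ZMod 2) = ((a : ℕ) : ZMod 2) * ((SA : ℤ) : ZMod 2)
          + ((b : ℕ) : ZMod 2) * ((SB : ℤ) : ZMod 2) := by
        rw [hL]; push_cast; ring
      rw [h1, hparA, hparB, odd_cast_zmod a ha, odd_cast_zmod b hb]
      linear_combination (m : ZMod 2) * h2zero
    have hLne : L ≠ 0 := by
      intro h; rw [h] at hLpar; simp at hLpar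
    set S := SA + SB with hS
    have hSpar : ((S : ℤ) : ZMod 2) = 1 := by
      have h1 : ((S : ℤ) : ZMod 2) = ((SA : ℤ) : ZMod 2) + ((SB : ℤ) : ZMod 2) := by
        rw [hS]; push_cast; ring
      rw [h1, hparA, hparB]
      linear_combination (m : ZMod 2) * h2zero
    have hSne : S ≠ 0 := by
      intro h; rw [h] at hSpar; simp at hSpar
    have hmajx : maj n x = Real.sign ((S : ℝ)) := by
      have husum : (∑ i, chi (x i)) = (S : ℝ) := by
        rw [← Finset.sum_filter_add_sum_filter_not univ
          (fun i : Fin n => (i : ℕ) < (n - 1) / 2 + 1) (fun i => chi (x i)),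
          ← hA, ← hB, hRA, hRB, hS]
        push_cast; ring
      unfold maj; rw [husum]
    have hSAub : SA ≤ (m : ℤ) + 1 := by
      have h1 := sum_pm_le A x; rw [cardA] at h1; push_cast at h1; linarith
    have hSAlb : -((m : ℤ) + 1) ≤ SA := by
      have h1 := neg_card_le_sum_pm A x; rw [cardA] at h1; push_cast at h1; linarith
    have hSBub : SB ≤ (m : ℤ) := by
      have h1 := sum_pm_le B x; rw [cardB] at h1; push_cast at h1; linarith
    have hSBlb : -(m : ℤ) ≤ SB := by
      have h1 := neg_card_le_sum_pm B x; rw [cardB] at h1; push_cast at h1; linarith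
    have hdvdB : (2 : ℤ) ∣ SB - (m : ℤ) := by
      have h1 : ((SB - (m : ℤ) : ℤ) : ZMod 2) = 0 := by
        push_cast
        push_cast at hparB
        rw [hparB]; ring
      exact_mod_cast (ZMod.intCast_zmod_eq_zero_iff_dvd _ 2).mp h1
    have hmemA : ∀ i : Fin n, i ∈ A → (i : ℕ) < (n - 1) / 2 + 1 := by
      intro i hi; rw [hA, Finset.mem_filter] at hi; exact hi.2
    have hmemB : ∀ i : Fin n, i ∈ B → ¬ ((i : ℕ) < (n - 1) / 2 + 1) := by
      intro i hi; rw [hB, Finset.mem_filter] at hi; exact hi.2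
    have hxeq : (∀ i ∈ A, x i = true) → (∀ i ∈ B, x i = false) → x = eVec n := by
      intro h1 h2; funext i
      by_cases hi : (i : ℕ) < (n - 1) / 2 + 1
      · rw [h1 i (by rw [hA]; exact Finset.mem_filter.mpr ⟨Finset.mem_univ i, hi⟩)]; simp [eVec, hi]
      · rw [h2 i (by rw [hB]; exact Finset.mem_filter.mpr ⟨Finset.mem_univ i, hi⟩)]; simp [eVec, hi]
    have hxeq' : (∀ i ∈ A, x i = false) → (∀ i ∈ B, x i = true) → x = fun i => !(eVec n i) := by
      intro h1 h2; funext i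
      by_cases hi : (i : ℕ) < (n - 1) / 2 + 1
      · rw [h1 i (by rw [hA]; exact Finset.mem_filter.mpr ⟨Finset.mem_univ i, hi⟩)]; simp [eVec, hi]
      · rw [h2 i (by rw [hB]; exact Finset.mem_filter.mpr ⟨Finset.mem_univ i, hi⟩)]; simp [eVec, hi]
    constructor
    · rw [hcast]
      exact_mod_cast hLne
    · rw [hcast]
      by_cases hc : x = eVec n ∨ x = fun i => !(eVec n i)
      · have hgf : gfun n x = - maj n x := by unfold gfun; rw [if_pos hc]
        rcases hc with he | he
        · have hSAe : SA = (m : ℤ) + 1 := by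
            have h1 : ∀ i ∈ A, (if x i then (1:ℤ) else -1) = 1 := by
              intro i hi
              have h2 : x i = true := by
                rw [he]; simp only [eVec, decide_eq_true_eq]
                exact hmemA i hi
              simp [h2]
            rw [hSA, Finset.sum_congr rfl h1, Finset.sum_const, cardA]; push_cast; ring
          have hSBe : SB = -(m : ℤ) := by
            have h1 : ∀ i ∈ B, (if x i then (1:ℤ) else -1) = -1 := by
              intro i hi
              have h2 : x i = false := by
                rw [he]; simp only [eVec]
                simpa using hmemB i hi
              simp [h2]
            rw [hSB, Finset.sum_congr rfl h1, Finset.sum_const, cardB]; push_cast; ring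
          have hSe : S = 1 := by rw [hS, hSAe, hSBe]; ring
          have hLneg : (L : ℝ) < 0 := by
            have : L < 0 := by rw [hL, hSAe, hSBe]; nlinarith
            exact_mod_cast this
          have hSr : Real.sign ((S : ℝ)) = 1 :=
            Real.sign_of_pos (by rw [hSe]; norm_num)
          rw [hgf, hmajx, hSr, Real.sign_of_neg hLneg]
        · have hSAe : SA = -((m : ℤ) + 1) := by
            have h1 : ∀ i ∈ A, (if x i then (1:ℤ) else -1) = -1 := by
              intro i hi
              have h2 : x i = false := by
                rw [he]; simp only [eVec, Bool.not_eq_false']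
                simpa using hmemA i hi
              simp [h2]
            rw [hSA, Finset.sum_congr rfl h1, Finset.sum_const, cardA]; push_cast; ring
          have hSBe : SB = (m : ℤ) := by
            have h1 : ∀ i ∈ B, (if x i then (1:ℤ) else -1) = 1 := by
              intro i hi
              have h2 : x i = true := by
                rw [he]; simp only [eVec, Bool.not_eq_true']
                simpa using hmemB i hi
              simp [h2]
            rw [hSB, Finset.sum_congr rfl h1, Finset.sum_const, cardB]; push_cast; ring
          have hSe : S = -1 := by rw [hS, hSAe, hSBe]; ring
          have hLpos : (0 : ℝ) < (L : ℝ) := by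
            have : 0 < L := by rw [hL, hSAe, hSBe]; nlinarith
            exact_mod_cast this
          have hSr : Real.sign ((S : ℝ)) = -1 :=
            Real.sign_of_neg (by rw [hSe]; norm_num)
          rw [hgf, hmajx, hSr, Real.sign_of_pos hLpos]
          ring
      · have hgf : gfun n x = maj n x := by unfold gfun; rw [if_neg hc]
        rw [hgf, hmajx]
        rcases hSne.lt_or_gt with hSneg | hSpos
        · -- S < 0 : show L < 0
          have hSBbnd : SB ≤ (m : ℤ) - 2 := by
            by_contra hcon
            push_neg at hcon
            have hSBm : SB = (m : ℤ) := by omega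
            have hallB : ∀ i ∈ B, x i = true := by
              apply all_true_of_sum_eq
              rw [← hSB, hSBm, cardB]
            have hSAm : SA = -((m : ℤ) + 1) := by omega
            have hallA : ∀ i ∈ A, x i = false := by
              apply all_false_of_sum_eq
              rw [← hSA, hSAm, cardA]; push_cast; ring
            exact hc (Or.inr (hxeq' hallA hallB))
          have hLneg : 0 < (a : ℤ) * (-SA) + (b : ℤ) * (-SB) := by
            apply keypos (m : ℤ) _ _ _ _ haZ habZ1 habZ2 (by exact_mod_cast hm2)
            · omega
            · omega
          have hLneg' : (L : ℝ) < 0 := by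
            have h1 : (a : ℤ) * (-SA) + (b : ℤ) * (-SB) = -((a : ℤ) * SA + (b : ℤ) * SB) := by
              ring
            have h2 : L < 0 := by rw [hL]; rw [h1] at hLneg; linarith
            exact_mod_cast h2
          have hSneg' : ((S : ℝ)) < 0 := by exact_mod_cast hSneg
          rw [Real.sign_of_neg hLneg', Real.sign_of_neg hSneg']
        · -- 0 < S : show 0 < L
          have hSBbnd : -((m : ℤ) - 2) ≤ SB := by
            by_contra hcon
            push_neg at hcon
            have hSBm : SB = -(m : ℤ) := by omega
            have hallB : ∀ i ∈ B, x i = false := by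
              apply all_false_of_sum_eq
              rw [← hSB, hSBm, cardB]
            have hSAm : SA = (m : ℤ) + 1 := by omega
            have hallA : ∀ i ∈ A, x i = true := by
              apply all_true_of_sum_eq
              rw [← hSA, hSAm, cardA]; push_cast; ring
            exact hc (Or.inl (hxeq hallA hallB))
          have hLpos : 0 < L := by
            rw [hL]
            apply keypos (m : ℤ) _ _ _ _ haZ habZ1 habZ2 (by exact_mod_cast hm2) hSBbnd
            omega
          have hLpos' : (0 : ℝ) < (L : ℝ) := by exact_mod_cast hLpos
          have hSpos' : (0 : ℝ) < ((S : ℝ)) := by exact_mod_cast hSpos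
          rw [Real.sign_of_pos hLpos', Real.sign_of_pos hSpos']
  · -- sum is zero
    have hinv : Function.Involutive (fun x : Fin n → Bool => fun i => !(x i)) :=
      fun x => funext fun i => Bool.not_not _
    have h1 : ∑ x : Fin n → Bool, gfun n (fun i => !(x i)) = ∑ x : Fin n → Bool, gfun n x :=
      Fintype.sum_bijective _ hinv.bijective _ _ (fun x => rfl)
    have h2 : ∑ x : Fin n → Bool, gfun n (fun i => !(x i)) = - ∑ x : Fin n → Bool, gfun n x := by
      rw [← Finset.sum_neg_distrib]
      exact Finset.sum_congr rfl fun x _ => hoddg x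
    linarith
end
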